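/- arXiv:1703.07507 — 6 statements merged into one kernel-verified Lean document; each statement's English description precedes it below -/
import Mathlib

section
/- For integers d ≥ 1 and m ≥ 1, q^{binomial(m,2)} * (1-q^m)/(1-q^d) * qbinom(2d, d+m) = q^{binomial(m,2)} * qbinom(2d-1, d-m) - q^{binomial(m+1,2)} * qbinom(2d-1, d-m-1), as an identity of rational functions (or formal power series) in q. -/
/-! When `m < d`, all three Gaussian binomials are multiples of the common
term `F = (q;q)_{2d-1} / ((q;q)_{d-m} (q;q)_{d+m})`, by the factors `1 - q^{2d}`, `1 - q^{d+m}` and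
`1 - q^{d-m}`; the identity then reduces to
`(1 - q^m)(1 - q^{2d}) / (1 - q^d) = (1 - q^{d+m}) - q^m (1 - q^{d-m}) = (1 - q^m)(1 + q^d)`.
When `m ≥ d` the binomials are trivial (`1` or `0`). -/

open Finset

/-- `(q;q)_n = ∏_{i=1}^n (1 - q^i)` as a formal power series over `ℚ`. -/
noncomputable def qp (n : ℕ) : PowerSeries ℚ :=
  ∏ i ∈ Finset.range n, (1 - (PowerSeries.X : PowerSeries ℚ) ^ (i + 1))

/-- The Gaussian binomial coefficient `qbinom(n, k)` with integer lower index: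
`(q;q)_n / ((q;q)_k (q;q)_{n-k})` if `0 ≤ k ≤ n`, and `0` otherwise. -/
noncomputable def qbinZ (n : ℕ) (k : ℤ) : PowerSeries ℚ :=
  if 0 ≤ k ∧ k ≤ (n : ℤ) then qp n * (qp k.toNat * qp (n - k.toNat))⁻¹ else 0

open PowerSeries

lemma constantCoeff_qp (n : ℕ) : constantCoeff (qp n) = 1 := by
  simp [qp, map_prod]

lemma qp_ne_zero (n : ℕ) : qp n ≠ 0 := fun h => by
  simpa [h] using constantCoeff_qp n

lemma qp_zero : qp 0 = 1 :=
  prod_range_zero _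

lemma qp_succ (n : ℕ) : qp (n + 1) = qp n * (1 - X ^ (n + 1)) :=
  prod_range_succ _ _

lemma constantCoeff_one_sub_X_pow {n : ℕ} (hn : n ≠ 0) :
    constantCoeff (1 - X ^ n : PowerSeries ℚ) = 1 := by
  simp [hn]

lemma inv_qp_mul_qp_succ (a b : ℕ) :
    (qp a * qp b)⁻¹ = (1 - X ^ (b + 1)) * (qp a * qp (b + 1))⁻¹ := by
  rw [qp_succ, ← mul_assoc, PowerSeries.mul_inv_rev (qp a * qp b), ← mul_assoc,
    PowerSeries.mul_inv_cancel _ (by simp [constantCoeff_one_sub_X_pow]), one_mul]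

lemma qbinZ_eq {n a b : ℕ} {k : ℤ} (hk : k = a) (h : a + b = n) :
    qbinZ n k = qp n * (qp a * qp b)⁻¹ := by
  obtain rfl : k.toNat = a := by omega
  obtain rfl : n - k.toNat = b := by omega
  exact if_pos (by omega)

lemma qbinZ_self (n : ℕ) : qbinZ n n = 1 := by
  rw [qbinZ_eq rfl (add_zero n), qp_zero, mul_one,
    PowerSeries.mul_inv_cancel _ (by simp [constantCoeff_qp])]

lemma qbinZ_zero_right (n : ℕ) : qbinZ n 0 = 1 := by
  rw [qbinZ_eq Nat.cast_zero.symm (zero_add n), qp_zero, one_mul,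
    PowerSeries.mul_inv_cancel _ (by simp [constantCoeff_qp])]

lemma qbinZ_of_neg (n : ℕ) {k : ℤ} (hk : k < 0) : qbinZ n k = 0 :=
  if_neg (by omega)

lemma qbinZ_of_lt {n : ℕ} {k : ℤ} (hk : n < k) : qbinZ n k = 0 :=
  if_neg (by omega)

theorem qbinZ_identity_of_lt {d m : ℕ} (hlt : m < d) :
    (X : PowerSeries ℚ) ^ (m.choose 2) * (1 - X ^ m) * (1 - X ^ d)⁻¹ * qbinZ (2 * d) (d + m)
      = X ^ (m.choose 2) * qbinZ (2 * d - 1) ((d : ℤ) - m)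
        - X ^ ((m + 1).choose 2) * qbinZ (2 * d - 1) ((d : ℤ) - m - 1) := by
  obtain ⟨c, rfl⟩ := Nat.exists_eq_add_of_lt hlt
  set F := qp (2 * m + 2 * c + 1) * (qp (c + 1) * qp (2 * m + c + 1))⁻¹
  have htop : qbinZ (2 * (m + c + 1)) ((m + c + 1 : ℕ) + m) = (1 - X ^ (2 * m + 2 * c + 2)) * F := by
    rw [qbinZ_eq (a := 2 * m + c + 1) (b := c + 1) (by push_cast; ring) (by ring),
      show 2 * (m + c + 1) = 2 * m + 2 * c + 1 + 1 by ring, qp_succ, mul_comm (qp _) (qp (c + 1))]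
    ring
  have hmid : qbinZ (2 * (m + c + 1) - 1) ((m + c + 1 : ℕ) - m) = (1 - X ^ (2 * m + c + 1)) * F := by
    rw [qbinZ_eq (a := c + 1) (b := 2 * m + c) (by push_cast; ring) (by omega),
      inv_qp_mul_qp_succ, show 2 * (m + c + 1) - 1 = 2 * m + 2 * c + 1 by omega]
    ring
  have hlow : qbinZ (2 * (m + c + 1) - 1) ((m + c + 1 : ℕ) - m - 1) = (1 - X ^ (c + 1)) * F := by
    rw [qbinZ_eq (a := c) (b := 2 * m + c + 1) (by push_cast; ring) (by omega),
      mul_comm (qp c), inv_qp_mul_qp_succ, mul_comm (qp _) (qp (c + 1)),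
      show 2 * (m + c + 1) - 1 = 2 * m + 2 * c + 1 by omega]
    ring
  have hinv : (1 - X ^ (m + c + 1))⁻¹ * (1 - X ^ (m + c + 1)) = (1 : PowerSeries ℚ) :=
    PowerSeries.inv_mul_cancel _ (by simp [constantCoeff_one_sub_X_pow])
  rw [htop, hmid, hlow, Nat.choose_succ_succ, Nat.choose_one_right]
  linear_combination X ^ m.choose 2 * (1 - X ^ m) * (1 + X ^ (m + c + 1)) * F * hinv

theorem stmt_0_general (d m : ℕ) (hm : 1 ≤ m) :
    (PowerSeries.X : PowerSeries ℚ) ^ (m.choose 2) * (1 - PowerSeries.X ^ m)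
        * (1 - PowerSeries.X ^ d)⁻¹ * qbinZ (2 * d) (d + m)
      = PowerSeries.X ^ (m.choose 2) * qbinZ (2 * d - 1) ((d : ℤ) - m)
        - PowerSeries.X ^ ((m + 1).choose 2) * qbinZ (2 * d - 1) ((d : ℤ) - m - 1) := by
  rcases lt_trichotomy m d with hlt | rfl | hgt
  · exact qbinZ_identity_of_lt hlt
  · have hinv : (1 - X ^ m) * (1 - X ^ m)⁻¹ = (1 : PowerSeries ℚ) :=
      PowerSeries.mul_inv_cancel _ (by simp [constantCoeff_one_sub_X_pow (by omega : m ≠ 0)])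
    rw [show (m : ℤ) + m = (2 * m : ℕ) by push_cast; ring, sub_self, qbinZ_self, qbinZ_zero_right,
      qbinZ_of_neg _ (by omega), mul_assoc _ (1 - X ^ m), hinv]
    ring
  · rw [qbinZ_of_lt (by push_cast; omega), qbinZ_of_neg _ (by omega), qbinZ_of_neg _ (by omega)]
    ring

/-- `q^{C(m,2)} (1-q^m)/(1-q^d) qbinom(2d, d+m)
      = q^{C(m,2)} qbinom(2d-1, d-m) - q^{C(m+1,2)} qbinom(2d-1, d-m-1)`. -/
theorem stmt_0 (d m : ℕ) (hd : 1 ≤ d) (hm : 1 ≤ m) :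
    (PowerSeries.X : PowerSeries ℚ) ^ (m.choose 2) * (1 - PowerSeries.X ^ m)
        * (1 - PowerSeries.X ^ d)⁻¹ * qbinZ (2 * d) (d + m)
      = PowerSeries.X ^ (m.choose 2) * qbinZ (2 * d - 1) ((d : ℤ) - m)
        - PowerSeries.X ^ ((m + 1).choose 2) * qbinZ (2 * d - 1) ((d : ℤ) - m - 1) :=
  stmt_0_general d m hm
end

section
/- For integers d ≥ 1, the sum over m from 1 to d of q^{binomial(m,2)} * (1-q^m) * qbinom(2d, d+m) equals (1-q^d)/(1+q^d) * qbinom(2d, d), as an identity of rational functions in q. -/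
open Finset

/-- The Gaussian binomial coefficient `qbinom(n,k)`. -/
noncomputable def qbin (n k : ℕ) : PowerSeries ℚ :=
  if k ≤ n then qp n * (qp k * qp (n - k))⁻¹ else 0

/-!
Put `g m = q^{C(m,2)} (1 - q^{d+m}) qbinom(2d, d+m)`. The ratio rule
`(1 - q^{k+1}) qbinom(n, k+1) = (1 - q^{n-k}) qbinom(n, k)` gives
`(1 + q^d) q^{C(m,2)} (1 - q^m) qbinom(2d, d+m) = g m - g (m+1)` for `m ≤ d`, so the sum times
`1 + q^d` telescopes to `g 1 - g (d+1) = (1 - q^d) qbinom(2d, d)`.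
-/

open PowerSeries

lemma qbin_mul_qp_mul_qp {n k : ℕ} (h : k ≤ n) : qbin n k * (qp k * qp (n - k)) = qp n := by
  rw [qbin, if_pos h, mul_assoc, PowerSeries.inv_mul_cancel _ (by simp [constantCoeff_qp]),
    mul_one]

lemma qbin_eq_zero_of_lt {n k : ℕ} (h : n < k) : qbin n k = 0 :=
  if_neg (Nat.not_le.2 h)

lemma one_sub_X_pow_succ_mul_qbin_succ (n k : ℕ) :
    (1 - X ^ (k + 1)) * qbin n (k + 1) = (1 - X ^ (n - k)) * qbin n k := by
  rcases Nat.lt_or_ge k n with hk | hk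
  · obtain ⟨j, hj⟩ : ∃ j, n - k = j + 1 := ⟨n - (k + 1), by omega⟩
    have h₁ := qbin_mul_qp_mul_qp (Nat.succ_le_of_lt hk)
    have h₂ := qbin_mul_qp_mul_qp hk.le
    rw [show n - (k + 1) = j by omega, qp_succ k] at h₁
    rw [hj, qp_succ j] at h₂
    rw [hj]
    apply mul_right_cancel₀ (mul_ne_zero (qp_ne_zero k) (qp_ne_zero j))
    linear_combination h₁ - h₂
  · simp [qbin_eq_zero_of_lt (Nat.lt_succ_of_le hk), Nat.sub_eq_zero_of_le hk]

noncomputable def tailTerm (d m : ℕ) : PowerSeries ℚ :=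
  X ^ m.choose 2 * (1 - X ^ (d + m)) * qbin (2 * d) (d + m)

lemma summand_mul_one_add_X_pow {d m : ℕ} (hm : m ≤ d) :
    X ^ m.choose 2 * (1 - X ^ m) * qbin (2 * d) (d + m) * (1 + X ^ d)
      = tailTerm d m - tailTerm d (m + 1) := by
  have hstep := one_sub_X_pow_succ_mul_qbin_succ (2 * d) (d + m)
  rw [show 2 * d - (d + m) = d - m by omega] at hstep
  have hXd : (X : PowerSeries ℚ) ^ d = X ^ m * X ^ (d - m) := by
    rw [← pow_add, Nat.add_sub_cancel' hm]
  simp only [tailTerm, Nat.choose_succ_succ' m 1, Nat.choose_one_right, ← add_assoc]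
  linear_combination X ^ m.choose 2 * X ^ m * hstep + X ^ m.choose 2 * qbin (2 * d) (d + m) * hXd

lemma tailTerm_one (d : ℕ) : tailTerm d 1 = (1 - X ^ d) * qbin (2 * d) d := by
  simpa [tailTerm, two_mul] using one_sub_X_pow_succ_mul_qbin_succ (2 * d) d

lemma tailTerm_succ_self (d : ℕ) : tailTerm d (d + 1) = 0 := by
  simp [tailTerm, qbin_eq_zero_of_lt (by omega : 2 * d < d + (d + 1))]

lemma constantCoeff_one_add_X_pow_ne_zero (d : ℕ) :
    constantCoeff (1 + X ^ d : PowerSeries ℚ) ≠ 0 := by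
  simp only [map_add, map_one, map_pow, constantCoeff_X]
  positivity

theorem stmt_1_general (d : ℕ) :
    ∑ m ∈ Finset.Icc 1 d,
        (PowerSeries.X : PowerSeries ℚ) ^ (m.choose 2) * (1 - PowerSeries.X ^ m)
          * qbin (2 * d) (d + m)
      = (1 - PowerSeries.X ^ d) * (1 + PowerSeries.X ^ d)⁻¹ * qbin (2 * d) d := by
  have htele : ∑ m ∈ Icc 1 d, (tailTerm d m - tailTerm d (m + 1))
      = tailTerm d 1 - tailTerm d (d + 1) := by
    rw [← Ico_add_one_right_eq_Icc, ← neg_inj, ← sum_neg_distrib]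
    simpa using sum_Ico_sub (tailTerm d) (by omega : 1 ≤ d + 1)
  rw [mul_right_comm, eq_mul_inv_iff_mul_eq (constantCoeff_one_add_X_pow_ne_zero d), sum_mul,
    sum_congr rfl fun m hm => summand_mul_one_add_X_pow (mem_Icc.1 hm).2, htele, tailTerm_one,
    tailTerm_succ_self, sub_zero]

/-- `Σ_{m=1}^{d} q^{C(m,2)} (1-q^m) qbinom(2d, d+m) = (1-q^d)/(1+q^d) qbinom(2d, d)`. -/
theorem stmt_1 (d : ℕ) (hd : 1 ≤ d) :
    ∑ m ∈ Finset.Icc 1 d,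
        (PowerSeries.X : PowerSeries ℚ) ^ (m.choose 2) * (1 - PowerSeries.X ^ m)
          * qbin (2 * d) (d + m)
      = (1 - PowerSeries.X ^ d) * (1 + PowerSeries.X ^ d)⁻¹ * qbin (2 * d) d :=
  stmt_1_general d
end

section
/- Let b ≥ 1 and let w be the permutation of {1,...,2b} associated with a linear extension of the poset 2 × b under the natural labeling ν(i,j) = j + (i-1)b. If k is a descent position of w (i.e., w_k > w_{k+1}), then w_k > b and w_{k+1} ≤ b. -/
/-!
Let `x = σ⁻¹ k` and `y = σ⁻¹ (k + 1)`. Since `σ` is order-preserving and `σ x < σ y`, we cannot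
have `y ≤ x`. The labeling `ν` is the lexicographic rank on `2 × b`, so a descent `ν y < ν x`
with `x`, `y` in the same row would give `y ≤ x`; hence `y` lies in the lower row and `x` in the
upper one, i.e. `ν y ≤ b < ν x`.
-/

namespace TwoRowPoset

variable {b : ℕ}

/-- The natural labeling `ν(i, j) = j + (i - 1) b`, with rows and columns indexed from `0`. -/
def label (p : Fin 2 × Fin b) : ℕ := p.2 + 1 + p.1 * b

lemma label_le_iff (p : Fin 2 × Fin b) : label p ≤ b ↔ p.1 = 0 := by
  obtain ⟨⟨i, hi⟩, ⟨j, hj⟩⟩ := p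
  simp only [label, Fin.ext_iff, Fin.val_zero]
  interval_cases i <;> omega

lemma fst_lt_of_label_lt {p q : Fin 2 × Fin b} (hlt : label q < label p) (hnle : ¬ q ≤ p) :
    q.1 < p.1 := by
  by_contra hge
  rcases (not_lt.mp hge).eq_or_lt with hrow | hrow
  · refine hnle ⟨hrow.ge, Fin.le_def.mpr ?_⟩
    simp only [label, hrow] at hlt
    omega
  · have hp : p.1 = 0 := Fin.ext (by omega)
    have hq : q.1 ≠ 0 := Fin.ne_of_gt (hp ▸ hrow)
    have := (label_le_iff p).mpr hp
    have := (label_le_iff q).not.mpr hq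
    omega

end TwoRowPoset

open TwoRowPoset in
/-- Let `σ` be a linear extension of the poset `2 × b`, and `w` the associated
permutation of `{1,…,2b}` via the natural labeling `ν(i,j) = j + (i-1)b`
(`0`-indexed: `ν(i,j) = (j+1) + i·b`).  If `k` is a descent position of `w`
(`w_k > w_{k+1}`), then `w_k > b` and `w_{k+1} ≤ b`. -/
theorem stmt_7 (b : ℕ) (σ : Fin 2 × Fin b ≃ Fin (2 * b))
    (hσ : ∀ x y : Fin 2 × Fin b, x ≤ y → σ x ≤ σ y)
    (w : Fin (2 * b) → ℕ)
    (hw : ∀ i : Fin (2 * b), w i = ((σ.symm i).2 : ℕ) + 1 + ((σ.symm i).1 : ℕ) * b)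
    (k : ℕ) (hk : k + 1 < 2 * b)
    (hdes : w ⟨k + 1, hk⟩ < w ⟨k, by omega⟩) :
    b < w ⟨k, by omega⟩ ∧ w ⟨k + 1, hk⟩ ≤ b := by
  set x := σ.symm ⟨k, by omega⟩
  set y := σ.symm ⟨k + 1, hk⟩
  have hnle : ¬ y ≤ x := fun hyx => by
    have := hσ y x hyx
    simp only [x, y, Equiv.apply_symm_apply, Fin.mk_le_mk] at this
    omega
  rw [hw, hw] at hdes ⊢
  have hrow : y.1 < x.1 := fst_lt_of_label_lt hdes hnle
  have hy : y.1 = 0 := Fin.ext (by omega)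
  have hx : x.1 ≠ 0 := Fin.ne_of_gt (hy ▸ hrow)
  exact ⟨not_le.mp ((label_le_iff x).not.mpr hx), (label_le_iff y).mpr hy⟩
end

section
/- For d ≥ 1, the generating function Σ_n a⁻(n;d) q^n for the number a⁻(n;d) of partitions of n whose Frobenius symbol has exactly d columns and whose last column is negative equals q^{d²} / ((q;q)_d² (1+q^d)). -/
/-!
The gaps `cᵢ = xᵢ - xᵢ₊₁ - 1` (and `c_{d-1} = x_{d-1}`) of a strictly decreasing row `x` of
length `d` are the multiplicities of a partition into parts at most `d`, of size
`∑ xᵢ - d(d-1)/2`. So Frobenius symbols with `d` columns are pairs of such partitions shifted by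
`d²`, with generating function `q^{d²} / (q;q)_d²`. The map `(x, y) ↦ (y + 1, x)` is a bijection
from symbols whose last column is negative onto those whose last column is positive, and it adds
`d` to the size; hence the negative ones are counted by that series divided by `1 + q^d`.
-/

open Finset
open scoped Classical

/-- `p` (a pair of functions `Fin d → ℕ`, the top and bottom rows) is a Frobenius
symbol of a partition of `n` with exactly `d` columns: both rows are strictly
decreasing and `Σ (xᵢ + yᵢ + 1) = n`. -/
def IsFrob (d n : ℕ) (p : (Fin d → ℕ) × (Fin d → ℕ)) : Prop :=
  StrictAnti p.1 ∧ StrictAnti p.2 ∧ (∑ i, (p.1 i + p.2 i + 1)) = n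

/-- Column `i` of the Frobenius symbol is positive, i.e. `xᵢ - yᵢ ≥ 1`. -/
def ColPos (d : ℕ) (p : (Fin d → ℕ) × (Fin d → ℕ)) (i : Fin d) : Prop :=
  p.2 i < p.1 i

/-- The number of parity changes between consecutive columns; the number of parity
blocks is this quantity plus one (for `d ≥ 1`). -/
noncomputable def numChanges (d : ℕ) (p : (Fin d → ℕ) × (Fin d → ℕ)) : ℕ :=
  (Finset.univ.filter fun i : Fin d =>
    ∃ h : (i : ℕ) + 1 < d, ¬ (ColPos d p i ↔ ColPos d p ⟨(i : ℕ) + 1, h⟩)).card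

/-- The last column (hence the last parity block) is positive. -/
def LastPos (d : ℕ) (p : (Fin d → ℕ) × (Fin d → ℕ)) : Prop :=
  ∀ h : d - 1 < d, ColPos d p ⟨d - 1, h⟩

/-- The last column (hence the last parity block) is negative. -/
def LastNeg (d : ℕ) (p : (Fin d → ℕ) × (Fin d → ℕ)) : Prop :=
  ∀ h : d - 1 < d, ¬ ColPos d p ⟨d - 1, h⟩

open PowerSeries Finset.HasAntidiagonal

section CountingSeries

variable {α β : Type*}

/-- `Nat.card` is `0` on infinite fibres, so the additive lemmas below need finite fibres. -/
noncomputable def countSeries (w : α → ℕ) : PowerSeries ℚ :=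
  PowerSeries.mk fun n => (Nat.card {a // w a = n} : ℚ)

lemma coeff_countSeries (w : α → ℕ) (n : ℕ) :
    coeff n (countSeries w) = Nat.card {a // w a = n} :=
  coeff_mk _ _

def fibreEquiv (e : α ≃ β) {v : α → ℕ} {w : β → ℕ} (h : ∀ a, w (e a) = v a) (n : ℕ) :
    {a // v a = n} ≃ {b // w b = n} :=
  e.subtypeEquiv fun a => by rw [h]

lemma countSeries_congr (e : α ≃ β) {v : α → ℕ} {w : β → ℕ} (h : ∀ a, w (e a) = v a) :
    countSeries v = countSeries w := by
  ext n
  simp only [coeff_countSeries, Nat.card_congr (fibreEquiv e h n)]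

lemma finite_fibre_of_equiv (e : α ≃ β) {v : α → ℕ} {w : β → ℕ} (h : ∀ a, w (e a) = v a)
    (n : ℕ) [Finite {a // v a = n}] : Finite {b // w b = n} :=
  Finite.of_equiv _ (fibreEquiv e h n)

instance (w : α → ℕ) [∀ n, Finite {a // w a = n}] (k n : ℕ) : Finite {a // w a + k = n} :=
  Finite.of_injective _
    (Subtype.impEmbedding _ (fun a => w a = n - k) fun _ _ => by omega).injective

lemma countSeries_add_const (w : α → ℕ) (k : ℕ) :
    countSeries (fun a => w a + k) = X ^ k * countSeries w := by
  ext n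
  rw [coeff_X_pow_mul', coeff_countSeries]
  split_ifs with hk
  · rw [coeff_countSeries]
    exact congrArg _ (Nat.card_congr (Equiv.subtypeEquivRight fun a => by omega))
  · have : IsEmpty {a // w a + k = n} := ⟨fun a => hk (by omega)⟩
    simp

lemma countSeries_eq_add_compl (v : α → ℕ) [∀ n, Finite {a // v a = n}] (P : α → Prop) :
    countSeries v = countSeries (fun a : {a // P a} => v a) +
      countSeries (fun a : {a // ¬ P a} => v a) := by
  ext n
  simp only [map_add, coeff_countSeries]
  have swap (Q : α → Prop) : {a : {a // Q a} // v a = n} ≃ {a : {a // v a = n} // Q a} :=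
    (Equiv.subtypeSubtypeEquivSubtypeInter Q (fun a => v a = n)).trans
      ((Equiv.subtypeEquivRight fun _ => and_comm).trans
        (Equiv.subtypeSubtypeEquivSubtypeInter (fun a => v a = n) Q).symm)
  rw [Nat.card_congr (swap P), Nat.card_congr (swap _), ← Nat.cast_add, ← Nat.card_sum,
    Nat.card_congr (Equiv.sumCompl fun a : {a // v a = n} => P a)]

def prodFibreEquiv (v : α → ℕ) (w : β → ℕ) (n : ℕ) :
    {p : α × β // v p.1 + w p.2 = n} ≃
      Σ ij : antidiagonal n, {a // v a = ij.1.1} × {b // w b = ij.1.2} where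
  toFun p := ⟨⟨(v p.1.1, w p.1.2), mem_antidiagonal.2 p.2⟩, ⟨p.1.1, rfl⟩, ⟨p.1.2, rfl⟩⟩
  invFun s := ⟨(s.2.1, s.2.2), by rw [s.2.1.2, s.2.2.2]; exact mem_antidiagonal.1 s.1.2⟩
  left_inv _ := rfl
  right_inv := by
    rintro ⟨⟨⟨i, j⟩, h⟩, ⟨a, ha⟩, ⟨b, hb⟩⟩
    dsimp only at ha hb
    subst ha hb
    rfl

variable {v : α → ℕ} {w : β → ℕ} [∀ n, Finite {a // v a = n}] [∀ n, Finite {b // w b = n}]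

instance (n : ℕ) : Finite {p : α × β // v p.1 + w p.2 = n} :=
  Finite.of_equiv _ (prodFibreEquiv v w n).symm

lemma countSeries_prod :
    countSeries (fun p : α × β => v p.1 + w p.2) = countSeries v * countSeries w := by
  ext n
  rw [coeff_countSeries, Nat.card_congr (prodFibreEquiv v w n), Nat.card_sigma, coeff_mul,
    ← Finset.sum_coe_sort (antidiagonal n)]
  push_cast
  simp only [Nat.card_prod, Nat.cast_mul, coeff_countSeries]

end CountingSeries

section PartSize

/-- `c i` is the multiplicity of the part `i + 1`, so `partSize` is the size of a partition
into parts at most `d`. -/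
def partSize {d : ℕ} (c : Fin d → ℕ) : ℕ := ∑ i, (i + 1) * c i

lemma le_partSize {d : ℕ} (c : Fin d → ℕ) (i : Fin d) : c i ≤ partSize c :=
  (Nat.le_mul_of_pos_left _ i.succ_pos).trans
    (Finset.single_le_sum (f := fun j : Fin d => (j + 1) * c j) (by simp) (mem_univ i))

instance {d : ℕ} (n : ℕ) : Finite {c : Fin d → ℕ // partSize c = n} :=
  Finite.of_injective _ (Subtype.impEmbedding _ (· ≤ fun _ => n)
    fun c hc i => hc ▸ le_partSize c i).injective

lemma partSize_snoc {k : ℕ} (c : Fin k → ℕ) (a : ℕ) :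
    partSize (Fin.snoc c a : Fin (k + 1) → ℕ) = partSize c + (k + 1) * a := by
  simp [partSize, Fin.sum_univ_castSucc]

lemma subsingleton_fibre_mul_left {m : ℕ} (hm : 0 < m) (n : ℕ) :
    Subsingleton {a : ℕ // m * a = n} :=
  ⟨fun a b => Subtype.ext (Nat.eq_of_mul_eq_mul_left hm (a.2.trans b.2.symm))⟩

lemma card_fibre_mul_left {m : ℕ} (hm : 0 < m) (n : ℕ) :
    Nat.card {a : ℕ // m * a = n} = if m ∣ n then 1 else 0 := by
  split_ifs with h
  · obtain ⟨a, rfl⟩ := h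
    exact Nat.card_eq_one_iff_unique.2 ⟨subsingleton_fibre_mul_left hm _, ⟨⟨a, rfl⟩⟩⟩
  · have : IsEmpty {a : ℕ // m * a = n} := ⟨fun a => h ⟨a.1, a.2.symm⟩⟩
    exact Nat.card_of_isEmpty

lemma countSeries_mul_mul_one_sub_X_pow {m : ℕ} (hm : 0 < m) :
    countSeries (fun a : ℕ => m * a) * (1 - X ^ m) = 1 := by
  ext n
  rw [mul_sub, mul_one, map_sub, coeff_mul_X_pow', coeff_one]
  simp only [coeff_countSeries, card_fibre_mul_left hm]
  rcases Nat.lt_or_ge n m with hn | hn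
  · have : m ∣ n ↔ n = 0 := ⟨fun h => Nat.eq_zero_of_dvd_of_lt h hn, fun h => h ▸ dvd_zero m⟩
    simp [hn.not_ge, this]
  · have : n ≠ 0 := by omega
    by_cases h : m ∣ n
    · simp [hn, h, this]
    · simp [hn, h, this, lt_of_le_of_ne hn (by rintro rfl; exact h dvd_rfl)]

lemma countSeries_partSize_mul_qp (d : ℕ) : countSeries (partSize (d := d)) * qp d = 1 := by
  induction d with
  | zero =>
    ext n
    by_cases hn : n = 0 <;> simp [qp, coeff_countSeries, partSize, coeff_one, hn, eq_comm (a := 0)]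
  | succ k ih =>
    have (n : ℕ) : Finite {a : ℕ // (k + 1) * a = n} :=
      have := subsingleton_fibre_mul_left k.succ_pos n
      inferInstance
    have snoc_split : countSeries (partSize (d := k + 1)) =
        countSeries (fun a : ℕ => (k + 1) * a) * countSeries (partSize (d := k)) := by
      rw [← countSeries_prod]
      refine (countSeries_congr (Fin.snocEquiv fun _ => ℕ) fun p => ?_).symm
      change partSize (Fin.snoc p.2 p.1 : Fin (k + 1) → ℕ) = _
      rw [partSize_snoc, add_comm]
    calc countSeries (partSize (d := k + 1)) * qp (k + 1)
        = (countSeries (partSize (d := k)) * qp k) *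
            (countSeries (fun a : ℕ => (k + 1) * a) * (1 - X ^ (k + 1))) := by
          rw [snoc_split, qp, prod_range_succ, ← qp]; ring
      _ = 1 := by rw [ih, countSeries_mul_mul_one_sub_X_pow k.succ_pos, one_mul]

end PartSize

section Staircase

variable {d : ℕ}

def succEntry (x : Fin d → ℕ) (i : Fin d) : ℕ :=
  if h : (i : ℕ) + 1 < d then x ⟨i + 1, h⟩ + 1 else 0

def stairSum (c : Fin d → ℕ) (i : Fin d) : ℕ := c i + ∑ j ∈ Ioi i, (c j + 1)

def gaps (x : Fin d → ℕ) (i : Fin d) : ℕ := x i - succEntry x i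

lemma Fin.Ioi_eq_insert (i : Fin d) (h : (i : ℕ) + 1 < d) :
    Ioi i = insert ⟨i + 1, h⟩ (Ioi ⟨i + 1, h⟩) := by
  ext j
  simp only [mem_Ioi, mem_insert, Fin.lt_def, Fin.ext_iff]
  omega

lemma stairSum_eq (c : Fin d → ℕ) (i : Fin d) :
    stairSum c i = c i + succEntry (stairSum c) i := by
  unfold succEntry
  split_ifs with h
  · rw [stairSum, Fin.Ioi_eq_insert i h, sum_insert (by simp), stairSum]
    ring
  · have : Ioi i = ∅ := by
      ext j
      simp only [mem_Ioi, Fin.lt_def, Finset.notMem_empty, iff_false]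
      omega
    simp [stairSum, this]

lemma strictAnti_stairSum (c : Fin d → ℕ) : StrictAnti (stairSum c) := by
  intro i j hij
  calc stairSum c j < ∑ k ∈ Ici j, (c k + 1) := by
        rw [← Finset.Ioi_insert, sum_insert (by simp), stairSum]
        omega
    _ ≤ ∑ k ∈ Ioi i, (c k + 1) :=
        sum_le_sum_of_subset fun k hk => mem_Ioi.2 (hij.trans_le (mem_Ici.1 hk))
    _ ≤ stairSum c i := Nat.le_add_left _ _

lemma eq_of_eq_add_succEntry {f g a : Fin d → ℕ} (hf : ∀ i, f i = a i + succEntry f i)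
    (hg : ∀ i, g i = a i + succEntry g i) : f = g := by
  suffices ∀ m (i : Fin d), d - i ≤ m → f i = g i from funext fun i => this _ i le_rfl
  intro m
  induction m with
  | zero => intro i hi; omega
  | succ m ih =>
    intro i hi
    rw [hf, hg, succEntry, succEntry]
    split_ifs with h
    · rw [ih _ (by simp only; omega)]
    · rfl

lemma gaps_stairSum (c : Fin d → ℕ) : gaps (stairSum c) = c :=
  funext fun i => by
    rw [gaps]
    have := stairSum_eq c i
    omega

lemma stairSum_gaps {x : Fin d → ℕ} (hx : StrictAnti x) : stairSum (gaps x) = x := by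
  refine eq_of_eq_add_succEntry (stairSum_eq _) fun i => ?_
  have : succEntry x i ≤ x i := by
    unfold succEntry
    split_ifs
    · exact hx (Fin.lt_def.2 (Nat.lt_succ_self _))
    · exact Nat.zero_le _
  rw [gaps]
  omega

variable (d) in
def strictAntiEquiv : (Fin d → ℕ) ≃ {x : Fin d → ℕ // StrictAnti x} where
  toFun c := ⟨stairSum c, strictAnti_stairSum c⟩
  invFun x := gaps x
  left_inv := gaps_stairSum
  right_inv x := Subtype.ext (stairSum_gaps x.2)

lemma sum_stairSum (c : Fin d → ℕ) : ∑ i, stairSum c i = partSize c + ∑ i : Fin d, (i : ℕ) := by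
  simp only [stairSum]
  rw [sum_add_distrib, sum_comm' (t' := univ) (s' := Iio) (by simp)]
  simp only [sum_const, Fin.card_Iio, smul_eq_mul, partSize, ← sum_add_distrib]
  exact sum_congr rfl fun j _ => by ring

end Staircase

lemma two_mul_sum_fin_add (d : ℕ) : 2 * ∑ i : Fin d, (i : ℕ) + d = d ^ 2 := by
  rw [Fin.sum_univ_eq_sum_range (fun i => i) d, mul_comm, sum_range_id_mul_two]
  cases d <;> simp
  ring

section Frobenius

abbrev FrobSymbol (d : ℕ) :=
  {p : (Fin d → ℕ) × (Fin d → ℕ) // StrictAnti p.1 ∧ StrictAnti p.2}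

def frobSize {d : ℕ} (p : (Fin d → ℕ) × (Fin d → ℕ)) : ℕ := ∑ i, (p.1 i + p.2 i + 1)

def frobEquiv (d : ℕ) : (Fin d → ℕ) × (Fin d → ℕ) ≃ FrobSymbol d :=
  ((strictAntiEquiv d).prodCongr (strictAntiEquiv d)).trans Equiv.subtypeProdEquivProd.symm

lemma frobSize_frobEquiv {d : ℕ} (bc : (Fin d → ℕ) × (Fin d → ℕ)) :
    frobSize (frobEquiv d bc).1 = partSize bc.1 + partSize bc.2 + d ^ 2 := by
  have := two_mul_sum_fin_add d
  change ∑ i, (stairSum bc.1 i + stairSum bc.2 i + 1) = _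
  simp only [sum_add_distrib, sum_const, card_univ, Fintype.card_fin, smul_eq_mul, mul_one]
  rw [sum_stairSum, sum_stairSum]
  omega

instance {d : ℕ} (n : ℕ) : Finite {p : FrobSymbol d // frobSize p.1 = n} :=
  finite_fibre_of_equiv (frobEquiv d) frobSize_frobEquiv n

lemma countSeries_frobSize (d : ℕ) :
    countSeries (fun p : FrobSymbol d => frobSize p.1) =
      X ^ (d ^ 2) * countSeries (partSize (d := d)) ^ 2 := by
  rw [← countSeries_congr (frobEquiv d) frobSize_frobEquiv, countSeries_add_const,
    countSeries_prod, sq (countSeries _)]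

end Frobenius

section LastColumn

variable {k : ℕ}

lemma lastNeg_succ_iff {p : (Fin (k + 1) → ℕ) × (Fin (k + 1) → ℕ)} :
    LastNeg (k + 1) p ↔ p.1 (Fin.last k) ≤ p.2 (Fin.last k) := by
  simp [LastNeg, ColPos, Fin.last]

lemma one_le_of_not_lastNeg {p : FrobSymbol (k + 1)} (h : ¬ LastNeg (k + 1) p.1)
    (i : Fin (k + 1)) : 1 ≤ p.1.1 i := by
  rw [lastNeg_succ_iff, not_le] at h
  exact (Nat.zero_le _).trans_lt h |>.trans_le (p.2.1.antitone (Fin.le_last i))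

variable (k) in
def lastNegEquiv :
    {p : FrobSymbol (k + 1) // LastNeg (k + 1) p.1} ≃
      {p : FrobSymbol (k + 1) // ¬ LastNeg (k + 1) p.1} where
  toFun p := ⟨⟨(p.1.1.2 + 1, p.1.1.1), fun _ _ h => Nat.succ_lt_succ (p.1.2.2 h), p.1.2.1⟩, by
    have := lastNeg_succ_iff.1 p.2
    simp only [lastNeg_succ_iff, Pi.add_apply, Pi.one_apply]
    omega⟩
  invFun p := ⟨⟨(p.1.1.2, p.1.1.1 - 1), p.1.2.2, fun i j h => by
    have := one_le_of_not_lastNeg p.2 j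
    have := p.1.2.1 h
    simp only [Pi.sub_apply, Pi.one_apply]
    omega⟩, by
    have := one_le_of_not_lastNeg p.2 (Fin.last k)
    have := p.2
    simp only [lastNeg_succ_iff, Pi.sub_apply, Pi.one_apply] at this ⊢
    omega⟩
  left_inv p := by ext <;> simp
  right_inv p := by
    ext i
    · have := one_le_of_not_lastNeg p.2 i
      simp only [Pi.add_apply, Pi.sub_apply, Pi.one_apply]
      omega
    · rfl

lemma frobSize_lastNegEquiv (p : {p : FrobSymbol (k + 1) // LastNeg (k + 1) p.1}) :
    frobSize (lastNegEquiv k p).1.1 = frobSize p.1.1 + (k + 1) := by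
  change ∑ i, (p.1.1.2 i + 1 + p.1.1.1 i + 1) = ∑ i, (p.1.1.1 i + p.1.1.2 i + 1) + (k + 1)
  simp only [sum_add_distrib, sum_const, card_univ, Fintype.card_fin, smul_eq_mul, mul_one]
  ring

lemma countSeries_frobSize_eq_mul (k : ℕ) :
    countSeries (fun p : FrobSymbol (k + 1) => frobSize p.1) =
      countSeries (fun p : {p : FrobSymbol (k + 1) // LastNeg (k + 1) p.1} => frobSize p.1.1) *
        (1 + X ^ (k + 1)) := by
  rw [countSeries_eq_add_compl _ (fun p : FrobSymbol (k + 1) => LastNeg (k + 1) p.1),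
    ← countSeries_congr (lastNegEquiv k) frobSize_lastNegEquiv, countSeries_add_const]
  ring

end LastColumn

lemma mk_card_isFrob_lastNeg (d : ℕ) :
    (PowerSeries.mk fun n =>
      ((Nat.card {p : (Fin d → ℕ) × (Fin d → ℕ) // IsFrob d n p ∧ LastNeg d p} : ℕ) : ℚ)) =
      countSeries (fun p : {p : FrobSymbol d // LastNeg d p.1} => frobSize p.1.1) := by
  ext n
  rw [coeff_mk, coeff_countSeries]
  exact congrArg _ (Nat.card_congr
    { toFun p := ⟨⟨⟨p.1, p.2.1.1, p.2.1.2.1⟩, p.2.2⟩, p.2.1.2.2⟩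
      invFun p := ⟨p.1.1.1, ⟨p.1.1.2.1, p.1.1.2.2, p.2⟩, p.1.2⟩
      left_inv _ := rfl
      right_inv _ := rfl })

/-- `Σ_n a⁻(n;d) qⁿ = q^{d²}/((q;q)_d² (1+q^d))`, where `a⁻(n;d)` is the number of
partitions of `n` whose Frobenius symbol has exactly `d` columns, the last of which
is negative. -/
theorem stmt_11 (d : ℕ) (hd : 1 ≤ d) :
    (PowerSeries.mk fun n =>
      ((Nat.card {p : (Fin d → ℕ) × (Fin d → ℕ) //
        IsFrob d n p ∧ LastNeg d p} : ℕ) : ℚ))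
    = PowerSeries.X ^ (d ^ 2) * ((qp d) ^ 2 * (1 + PowerSeries.X ^ d))⁻¹ := by
  obtain ⟨k, rfl⟩ := Nat.exists_eq_add_of_le' hd
  have hconst : constantCoeff (qp (k + 1) ^ 2 * (1 + X ^ (k + 1))) ≠ 0 := by simp [qp]
  rw [eq_mul_inv_iff_mul_eq hconst, mk_card_isFrob_lastNeg]
  calc _ = countSeries (fun p : FrobSymbol (k + 1) => frobSize p.1) * qp (k + 1) ^ 2 := by
        rw [countSeries_frobSize_eq_mul]; ring
    _ = X ^ ((k + 1) ^ 2) * (countSeries (partSize (d := k + 1)) * qp (k + 1)) ^ 2 := by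
        rw [countSeries_frobSize]; ring
    _ = X ^ ((k + 1) ^ 2) := by rw [countSeries_partSize_mul_qp, one_pow, mul_one]
end

section
/- For d ≥ 1, the generating function Σ_n a⁺(n;d) q^n for the number a⁺(n;d) of partitions of n whose Frobenius symbol has exactly d columns and whose last column is positive equals q^{d²+d} / ((q;q)_d² (1+q^d)). -/
/-
A Frobenius symbol with `d` columns is a pair of strictly decreasing rows of length `d`, weighted
by the sum of its entries plus `d`. One row is counted by `F_d = q^{d(d-1)/2} / (q;q)_d`: splitting
on whether the last entry vanishes and lowering all entries by one gives
`F_{d+1} = q^{d+1} F_{d+1} + q^d F_d`. Hence all symbols are counted by `q^d F_d²`.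

Exchanging the rows of a symbol whose last column is not positive and raising the new top row by
one is a bijection onto the symbols whose last column is positive, raising the weight by `d`. So
the series `P` and `N` of the symbols with positive and non-positive last column satisfy
`P = q^d N` and `P + N = q^d F_d²`, whence `(1 + q^d) P = q^{2d} F_d² = q^{d²+d} / (q;q)_d²`.
-/

open Finset
open scoped Classical

open PowerSeries Function

section WeightGF

variable (R : Type*) [Semiring R] {α β : Type*}

/-- `Nat.card` of an infinite fibre is `0`, so the lemmas below assume finite fibres. -/
noncomputable def weightGF (w : α → ℕ) : R⟦X⟧ :=
  mk fun n => (Nat.card {a // w a = n} : R)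

variable {R}

theorem weightGF_congr {v : β → ℕ} {w : α → ℕ} {f : α → β} (hf : Bijective f)
    (hvw : ∀ a, v (f a) = w a) : weightGF R v = weightGF R w := by
  ext n
  rw [weightGF, weightGF, coeff_mk, coeff_mk, Nat.card_congr
    ((Equiv.ofBijective f hf).subtypeEquiv (p := fun a => w a = n) (q := fun b => v b = n)
      fun a => by rw [Equiv.ofBijective_apply, hvw]).symm]

theorem weightGF_add_const (w : α → ℕ) (k : ℕ) :
    weightGF R (fun a => w a + k) = X ^ k * weightGF R w := by
  ext n
  rw [coeff_X_pow_mul', weightGF, weightGF, coeff_mk]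
  split_ifs with h
  · rw [coeff_mk, Nat.card_congr (Equiv.subtypeEquivRight (p := fun a => w a + k = n)
      (q := fun a => w a = n - k) fun a => by omega)]
  · have : IsEmpty {a // w a + k = n} := ⟨fun a => h (by omega)⟩
    rw [Nat.card_of_isEmpty, Nat.cast_zero]

theorem weightGF_sumElim {w : α → ℕ} {v : β → ℕ} (hw : ∀ n, Finite {a // w a = n})
    (hv : ∀ n, Finite {b // v b = n}) :
    weightGF R (Sum.elim w v) = weightGF R w + weightGF R v := by
  ext n
  have : Finite {a // Sum.elim w v (.inl a) = n} := hw n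
  have : Finite {b // Sum.elim w v (.inr b) = n} := hv n
  rw [map_add, weightGF, weightGF, weightGF, coeff_mk, coeff_mk, coeff_mk,
    Nat.card_congr Equiv.subtypeSum, Nat.card_sum, Nat.cast_add]
  rfl

def fiberAddEquiv (w : α → ℕ) (v : β → ℕ) (n : ℕ) :
    {p : α × β // w p.1 + v p.2 = n} ≃
      Σ ij : antidiagonal n, {a // w a = ij.1.1} × {b // v b = ij.1.2} where
  toFun p := ⟨⟨(w p.1.1, v p.1.2), Finset.HasAntidiagonal.mem_antidiagonal.2 p.2⟩,
    ⟨p.1.1, rfl⟩, ⟨p.1.2, rfl⟩⟩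
  invFun s := ⟨(s.2.1.1, s.2.2.1), by
    rw [s.2.1.2, s.2.2.2]; exact Finset.HasAntidiagonal.mem_antidiagonal.1 s.1.2⟩
  left_inv _ := rfl
  right_inv := by
    rintro ⟨⟨⟨i, j⟩, hij⟩, ⟨a, ha⟩, ⟨b, hb⟩⟩
    dsimp only at ha hb
    subst ha hb
    rfl

theorem finite_fiber_add {w : α → ℕ} {v : β → ℕ} (hw : ∀ n, Finite {a // w a = n})
    (hv : ∀ n, Finite {b // v b = n}) (n : ℕ) : Finite {p : α × β // w p.1 + v p.2 = n} :=
  have := hw; have := hv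
  .of_equiv _ (fiberAddEquiv w v n).symm

theorem weightGF_add {w : α → ℕ} {v : β → ℕ} (hw : ∀ n, Finite {a // w a = n})
    (hv : ∀ n, Finite {b // v b = n}) :
    weightGF R (fun p : α × β => w p.1 + v p.2) = weightGF R w * weightGF R v := by
  ext n
  have := hw; have := hv
  rw [coeff_mul, weightGF, coeff_mk, Nat.card_congr (fiberAddEquiv w v n), Nat.card_sigma,
    Nat.cast_sum]
  simp only [weightGF, coeff_mk, Nat.card_prod, Nat.cast_mul]
  exact Finset.sum_coe_sort (antidiagonal n) fun ij : ℕ × ℕ =>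
    (Nat.card {a // w a = ij.1} : R) * Nat.card {b // v b = ij.2}

theorem finite_fiber_add_const {w : α → ℕ} (hw : ∀ n, Finite {a // w a = n})
    (k n : ℕ) : Finite {a // w a + k = n} :=
  have := hw (n - k)
  .of_injective (fun a => (⟨a.1, by omega⟩ : {a // w a = n - k})) fun _ _ h =>
    Subtype.ext (Subtype.mk.inj h)

theorem finite_fiber_subtype {w : α → ℕ} (hw : ∀ n, Finite {a // w a = n})
    (P : α → Prop) (n : ℕ) : Finite {a : Subtype P // w a.1 = n} :=
  have := hw n
  .of_injective (fun a => (⟨a.1.1, a.2⟩ : {a // w a = n})) fun _ _ h =>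
    Subtype.ext (Subtype.ext (Subtype.mk.inj h))

end WeightGF

theorem Fin.strictAnti_snoc {α : Type*} [Preorder α] {d : ℕ} {f : Fin d → α}
    (hf : StrictAnti f) {a : α} (ha : ∀ i, a < f i) :
    StrictAnti (Fin.snoc (α := fun _ => α) f a) := by
  intro i j hij
  obtain ⟨i, rfl⟩ := Fin.exists_castSucc_eq.2 (Fin.ne_last_of_lt hij)
  induction j using Fin.lastCases with
  | last => simpa using ha i
  | cast j => simpa using hf (Fin.castSucc_lt_castSucc_iff.1 hij)

namespace Frobenius

abbrev Row (d : ℕ) := {x : Fin d → ℕ // StrictAnti x}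

variable {d : ℕ}

def Row.size (x : Row d) : ℕ := ∑ i, x.1 i

theorem Row.le_size (x : Row d) (i : Fin d) : x.1 i ≤ x.size :=
  single_le_sum (fun _ _ => Nat.zero_le _) (mem_univ i)

theorem Row.finite_fiber (n : ℕ) : Finite {x : Row d // x.size = n} :=
  .of_injective
    (fun x i => (⟨x.1.1 i, Nat.lt_succ_of_le ((x.1.le_size i).trans_eq x.2)⟩ : Fin (n + 1)))
    fun x y h => Subtype.ext (Subtype.ext (funext fun i => by simpa using congrFun h i))

def Row.shift (x : Row d) : Row d :=
  ⟨fun i => x.1 i + 1, fun _ _ h => Nat.add_lt_add_right (x.2 h) 1⟩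

def Row.shiftSnoc (x : Row d) : Row (d + 1) :=
  ⟨Fin.snoc (α := fun _ => ℕ) x.shift.1 0, Fin.strictAnti_snoc x.shift.2 fun _ => Nat.succ_pos _⟩

theorem Row.size_shift (x : Row d) : x.shift.size = x.size + d := by
  simp [Row.size, Row.shift, sum_add_distrib]

theorem Row.size_shiftSnoc (x : Row d) : x.shiftSnoc.size = x.size + d := by
  rw [← x.size_shift]
  simp [Row.size, Row.shiftSnoc, Fin.sum_univ_castSucc]

theorem Row.shift_injective : Injective (Row.shift (d := d)) := fun x y h =>
  Subtype.ext (funext fun i => by simpa [Row.shift] using congrFun (congrArg Subtype.val h) i)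

theorem Row.exists_shift_eq (x : Row (d + 1)) (hx : x.1 (Fin.last d) ≠ 0) :
    ∃ y : Row (d + 1), y.shift = x := by
  have hpos (i) : x.1 i ≠ 0 := fun h => hx (by have := x.2.antitone (Fin.le_last i); omega)
  refine ⟨⟨fun i => x.1 i - 1, fun i j hij => ?_⟩, Subtype.ext (funext fun i => ?_)⟩
  · have := x.2 hij; have := hpos j; dsimp only; omega
  · have := hpos i; simp only [Row.shift]; omega

theorem Row.exists_shiftSnoc_eq (x : Row (d + 1)) (hx : x.1 (Fin.last d) = 0) :
    ∃ y : Row d, y.shiftSnoc = x := by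
  have hpos (i : Fin d) : x.1 i.castSucc ≠ 0 := (x.2 (Fin.castSucc_lt_last i)).ne_bot
  refine ⟨⟨fun i => x.1 i.castSucc - 1, fun i j hij => ?_⟩, Subtype.ext (funext fun j => ?_)⟩
  · have := x.2 (Fin.castSucc_lt_castSucc_iff.2 hij); have := hpos j; dsimp only; omega
  · induction j using Fin.lastCases with
    | last => simp [Row.shiftSnoc, hx]
    | cast i => have := hpos i; simp only [Row.shiftSnoc, Row.shift, Fin.snoc_castSucc]; omega

theorem Row.bijective_sumElim_shift_shiftSnoc :
    Bijective (Sum.elim Row.shift Row.shiftSnoc : Row (d + 1) ⊕ Row d → Row (d + 1)) := by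
  constructor
  · have hlast (x : Row (d + 1)) (y : Row d) : x.shift ≠ y.shiftSnoc := fun h => by
      simpa [Row.shift, Row.shiftSnoc] using congrFun (congrArg Subtype.val h) (Fin.last d)
    rintro (x | x) (y | y) h
    · exact congrArg Sum.inl (Row.shift_injective h)
    · exact absurd h (hlast x y)
    · exact absurd h.symm (hlast y x)
    · refine congrArg Sum.inr (Subtype.ext (funext fun i => ?_))
      simpa [Row.shiftSnoc, Row.shift] using congrFun (congrArg Subtype.val h) i.castSucc
  · intro x
    by_cases hx : x.1 (Fin.last d) = 0
    · obtain ⟨y, rfl⟩ := x.exists_shiftSnoc_eq hx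
      exact ⟨.inr y, rfl⟩
    · obtain ⟨y, rfl⟩ := x.exists_shift_eq hx
      exact ⟨.inl y, rfl⟩

section

variable (R : Type*) [Semiring R]

theorem weightGF_rowSize_zero : weightGF R (Row.size (d := 0)) = 1 := by
  ext n
  rw [weightGF, coeff_mk, coeff_one]
  split_ifs with hn
  · subst hn
    rw [Nat.card_eq_one_iff_unique.2 ⟨inferInstance, ⟨⟨⟨finZeroElim, finZeroElim⟩, rfl⟩⟩⟩,
      Nat.cast_one]
  · have : IsEmpty {x : Row 0 // x.size = n} := ⟨fun x => hn (by simpa [Row.size] using x.2.symm)⟩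
    rw [Nat.card_of_isEmpty, Nat.cast_zero]

theorem weightGF_rowSize_succ :
    weightGF R (Row.size (d := d + 1)) =
      X ^ (d + 1) * weightGF R (Row.size (d := d + 1)) +
        X ^ d * weightGF R (Row.size (d := d)) := by
  conv_lhs => rw [weightGF_congr Row.bijective_sumElim_shift_shiftSnoc
      (w := Sum.elim (fun x => x.size + (d + 1)) (fun x => x.size + d))
      (by rintro (x | x) <;> simp [Row.size_shift, Row.size_shiftSnoc]),
    weightGF_sumElim (finite_fiber_add_const Row.finite_fiber _)
      (finite_fiber_add_const Row.finite_fiber _),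
    weightGF_add_const, weightGF_add_const]

end

theorem qp_mul_weightGF_rowSize (d : ℕ) :
    qp d * weightGF ℚ (Row.size (d := d)) = X ^ d.choose 2 := by
  induction d with
  | zero => simp [qp, weightGF_rowSize_zero]
  | succ d ih =>
    have hrec := weightGF_rowSize_succ ℚ (d := d)
    have hchoose : (d + 1).choose 2 = d + d.choose 2 := by simp [Nat.choose_succ_succ']
    rw [qp, prod_range_succ, ← qp, hchoose, pow_add X d (d.choose 2), ← ih]
    linear_combination qp d * hrec

abbrev Symbol (d : ℕ) := Row d × Row d

def Symbol.toPair (p : Symbol d) : (Fin d → ℕ) × (Fin d → ℕ) := (p.1.1, p.2.1)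

def Symbol.size (p : Symbol d) : ℕ := p.1.size + p.2.size + d

theorem Symbol.size_eq_sum (p : Symbol d) : p.size = ∑ i, (p.1.1 i + p.2.1 i + 1) := by
  simp [Symbol.size, Row.size, sum_add_distrib]

theorem Symbol.finite_fiber (n : ℕ) : Finite {p : Symbol d // p.size = n} :=
  finite_fiber_add_const (finite_fiber_add Row.finite_fiber Row.finite_fiber) d n

def Symbol.flip (p : Symbol d) : Symbol d := (p.2.shift, p.1)

theorem Symbol.size_flip (p : Symbol d) : p.flip.size = p.size + d := by
  simp only [Symbol.flip, Symbol.size, Row.size_shift]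
  ring

theorem lastPos_succ_iff {q : (Fin (d + 1) → ℕ) × (Fin (d + 1) → ℕ)} :
    LastPos (d + 1) q ↔ q.2 (Fin.last d) < q.1 (Fin.last d) :=
  ⟨fun h => h (Nat.lt_succ_self d), fun h _ => h⟩

theorem Symbol.lastPos_flip {p : Symbol (d + 1)} (hp : ¬ LastPos (d + 1) p.toPair) :
    LastPos (d + 1) p.flip.toPair := by
  simp only [Symbol.toPair, Symbol.flip, Row.shift, lastPos_succ_iff] at hp ⊢
  omega

theorem Symbol.bijective_flip :
    Bijective (fun p : {p : Symbol (d + 1) // ¬ LastPos (d + 1) p.toPair} =>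
      (⟨p.1.flip, Symbol.lastPos_flip p.2⟩ :
        {p : Symbol (d + 1) // LastPos (d + 1) p.toPair})) := by
  constructor
  · rintro ⟨⟨x, y⟩, hp⟩ ⟨⟨x', y'⟩, hp'⟩ h
    simp only [Subtype.mk.injEq, Symbol.flip, Prod.mk.injEq] at h
    obtain ⟨hy, rfl⟩ := h
    obtain rfl := Row.shift_injective hy
    rfl
  · rintro ⟨⟨x, y⟩, hp⟩
    simp only [Symbol.toPair, lastPos_succ_iff] at hp
    obtain ⟨x', rfl⟩ := x.exists_shift_eq (by omega)
    refine ⟨⟨(y, x'), ?_⟩, rfl⟩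
    simp only [Symbol.toPair, lastPos_succ_iff, Row.shift] at hp ⊢
    omega

section

variable (R : Type*) [Semiring R]

theorem weightGF_symbolSize :
    weightGF R (Symbol.size (d := d)) = X ^ d * (weightGF R (Row.size (d := d))) ^ 2 := by
  unfold Symbol.size
  rw [weightGF_add_const, weightGF_add Row.finite_fiber Row.finite_fiber, sq]

theorem weightGF_symbolSize_eq_add (P : Symbol d → Prop) :
    weightGF R (Symbol.size (d := d)) =
      weightGF R (fun p : Subtype P => p.1.size) +
        weightGF R (fun p : {p // ¬ P p} => p.1.size) := by
  rw [← weightGF_sumElim (finite_fiber_subtype Symbol.finite_fiber _)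
    (finite_fiber_subtype Symbol.finite_fiber _)]
  exact weightGF_congr (Equiv.sumCompl P).bijective (by rintro (p | p) <;> rfl)

theorem weightGF_lastPos_eq :
    weightGF R (fun p : {p : Symbol (d + 1) // LastPos (d + 1) p.toPair} => p.1.size) =
      X ^ (d + 1) *
        weightGF R (fun p : {p : Symbol (d + 1) // ¬ LastPos (d + 1) p.toPair} => p.1.size) := by
  rw [weightGF_congr Symbol.bijective_flip fun p => p.1.size_flip, weightGF_add_const]

theorem genFun_lastPos_eq_weightGF :
    (mk fun n => ((Nat.card {p : (Fin d → ℕ) × (Fin d → ℕ) // IsFrob d n p ∧ LastPos d p} : ℕ) : R))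
      = weightGF R (fun p : {p : Symbol d // LastPos d p.toPair} => p.1.size) := by
  ext n
  rw [weightGF, coeff_mk, coeff_mk]
  congr 1
  refine Nat.card_congr
    { toFun p := ⟨⟨(⟨p.1.1, p.2.1.1⟩, ⟨p.1.2, p.2.1.2.1⟩), p.2.2⟩, by
        rw [Symbol.size_eq_sum]; exact p.2.1.2.2⟩
      invFun p := ⟨p.1.1.toPair, ⟨p.1.1.1.2, p.1.1.2.2, (Symbol.size_eq_sum _).symm.trans p.2⟩,
        p.1.2⟩
      left_inv _ := rfl
      right_inv _ := rfl }

end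

end Frobenius

open Frobenius

/-- `Σ_n a⁺(n;d) qⁿ = q^{d²+d}/((q;q)_d² (1+q^d))`, where `a⁺(n;d)` is the number of
partitions of `n` whose Frobenius symbol has exactly `d` columns, the last of which
is positive. -/
theorem stmt_12 (d : ℕ) (hd : 1 ≤ d) :
    (PowerSeries.mk fun n =>
      ((Nat.card {p : (Fin d → ℕ) × (Fin d → ℕ) //
        IsFrob d n p ∧ LastPos d p} : ℕ) : ℚ))
    = PowerSeries.X ^ (d ^ 2 + d) * ((qp d) ^ 2 * (1 + PowerSeries.X ^ d))⁻¹ := by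
  obtain ⟨d, rfl⟩ : ∃ k, d = k + 1 := ⟨d - 1, by omega⟩
  have hunit : constantCoeff (qp (d + 1) ^ 2 * (1 + X ^ (d + 1))) ≠ 0 := by
    simp [qp, map_prod]
  have hexp : d + 1 + (d + 1) + (d + 1).choose 2 * 2 = (d + 1) ^ 2 + (d + 1) := by
    qify [Nat.cast_choose_two ℚ (d + 1)]
    ring
  have hsymbol := weightGF_symbolSize ℚ (d := d + 1)
  have hsplit := weightGF_symbolSize_eq_add ℚ fun p : Symbol (d + 1) => LastPos (d + 1) p.toPair
  have hflip := weightGF_lastPos_eq ℚ (d := d)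
  rw [genFun_lastPos_eq_weightGF, eq_mul_inv_iff_mul_eq hunit, ← hexp, pow_add, pow_add, pow_mul,
    ← qp_mul_weightGF_rowSize]
  linear_combination qp (d + 1) ^ 2 * (hflip - X ^ (d + 1) * hsplit + X ^ (d + 1) * hsymbol)
end

section
/- For d ≥ m ≥ 1 and all n, a⁻_m(n;d) = a⁺_m(n+d; d), where a⁺_m(n;d) (resp. a⁻_m(n;d)) is the number of partitions of n whose Frobenius symbol has exactly d columns and exactly m parity blocks with the last block positive (resp. negative). -/
/-!
The map `(x; y) ↦ (y + 1; x)` on Frobenius symbols with `d` columns adds `d` to the size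
and reverses the sign of every column (`yᵢ + 1 > xᵢ` iff `xᵢ ≤ yᵢ`), so it keeps the parity
blocks and turns a negative last block into a positive one. It is a bijection onto the
symbols whose last column is positive: there `x_d > y_d ≥ 0`, so the whole top row is
positive and can be lowered by one.
-/

open Finset
open scoped Classical

namespace Frobenius

variable {d : ℕ}

def swapSucc (p : (Fin d → ℕ) × (Fin d → ℕ)) : (Fin d → ℕ) × (Fin d → ℕ) :=
  (fun i => p.2 i + 1, p.1)

def swapPred (q : (Fin d → ℕ) × (Fin d → ℕ)) : (Fin d → ℕ) × (Fin d → ℕ) :=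
  (q.2, fun i => q.1 i - 1)

lemma swapPred_swapSucc (p : (Fin d → ℕ) × (Fin d → ℕ)) : swapPred (swapSucc p) = p := by
  simp [swapPred, swapSucc]

lemma swapSucc_swapPred {q : (Fin d → ℕ) × (Fin d → ℕ)} (hq : ∀ i, 0 < q.1 i) :
    swapSucc (swapPred q) = q := by
  ext i
  · simpa [swapPred, swapSucc] using Nat.sub_add_cancel (hq i)
  · rfl

lemma strictAnti_add_one_iff {α : Type*} [Preorder α] {f : α → ℕ} :
    StrictAnti (fun i => f i + 1) ↔ StrictAnti f :=
  ⟨fun h _ _ hab => Nat.succ_lt_succ_iff.1 (h hab), fun h _ _ hab => Nat.succ_lt_succ (h hab)⟩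

lemma isFrob_swapSucc_iff {n : ℕ} {p : (Fin d → ℕ) × (Fin d → ℕ)} :
    IsFrob d (n + d) (swapSucc p) ↔ IsFrob d n p := by
  have hsum : ∑ i, (p.2 i + 1 + p.1 i + 1) = ∑ i, (p.1 i + p.2 i + 1) + d := by
    simp only [Finset.sum_add_distrib, Finset.sum_const, Finset.card_univ,
      Fintype.card_fin, smul_eq_mul, mul_one]
    ring
  simp only [IsFrob, swapSucc, strictAnti_add_one_iff, hsum, Nat.add_right_cancel_iff]
  tauto

lemma colPos_swapSucc_iff {p : (Fin d → ℕ) × (Fin d → ℕ)} {i : Fin d} :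
    ColPos d (swapSucc p) i ↔ ¬ ColPos d p i := by
  simp only [ColPos, swapSucc]
  omega

lemma numChanges_swapSucc (p : (Fin d → ℕ) × (Fin d → ℕ)) :
    numChanges d (swapSucc p) = numChanges d p := by
  simp only [numChanges, colPos_swapSucc_iff, not_iff_not]

lemma lastPos_swapSucc_iff {p : (Fin d → ℕ) × (Fin d → ℕ)} :
    LastPos d (swapSucc p) ↔ LastNeg d p := by
  simp only [LastPos, LastNeg, colPos_swapSucc_iff]

lemma swapSucc_mem_iff {m n : ℕ} {p : (Fin d → ℕ) × (Fin d → ℕ)} :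
    (IsFrob d (n + d) (swapSucc p) ∧ numChanges d (swapSucc p) + 1 = m ∧
        LastPos d (swapSucc p)) ↔
      IsFrob d n p ∧ numChanges d p + 1 = m ∧ LastNeg d p := by
  rw [isFrob_swapSucc_iff, numChanges_swapSucc, lastPos_swapSucc_iff]

lemma pos_fst_of_lastPos {q : (Fin d → ℕ) × (Fin d → ℕ)} (hanti : StrictAnti q.1)
    (hlast : LastPos d q) (i : Fin d) : 0 < q.1 i := by
  have hd : d - 1 < d := Nat.sub_one_lt_of_lt i.2
  calc 0 ≤ q.2 ⟨d - 1, hd⟩ := Nat.zero_le _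
    _ < q.1 ⟨d - 1, hd⟩ := hlast hd
    _ ≤ q.1 i := hanti.antitone (Fin.le_def.2 (Nat.le_sub_one_of_lt i.2))

end Frobenius

open Frobenius in
theorem stmt_14_general (d m n : ℕ) :
    Nat.card {p : (Fin d → ℕ) × (Fin d → ℕ) //
        IsFrob d n p ∧ numChanges d p + 1 = m ∧ LastNeg d p}
      = Nat.card {p : (Fin d → ℕ) × (Fin d → ℕ) //
        IsFrob d (n + d) p ∧ numChanges d p + 1 = m ∧ LastPos d p} := by
  have hpos : ∀ q : {q : (Fin d → ℕ) × (Fin d → ℕ) //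
      IsFrob d (n + d) q ∧ numChanges d q + 1 = m ∧ LastPos d q}, ∀ i, 0 < q.1.1 i :=
    fun q => pos_fst_of_lastPos q.2.1.1 q.2.2.2
  exact Nat.card_congr
    { toFun := fun p => ⟨swapSucc p.1, swapSucc_mem_iff.2 p.2⟩
      invFun := fun q => ⟨swapPred q.1,
        swapSucc_mem_iff.1 (by rw [swapSucc_swapPred (hpos q)]; exact q.2)⟩
      left_inv := fun p => Subtype.ext (swapPred_swapSucc p.1)
      right_inv := fun q => Subtype.ext (swapSucc_swapPred (hpos q)) }

/-- `a⁻_m(n;d) = a⁺_m(n+d;d)` for `d ≥ m ≥ 1`: the number of partitions of `n` whose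
Frobenius symbol has exactly `d` columns and exactly `m` parity blocks with the last
block negative equals the number of partitions of `n+d` with exactly `d` columns and
exactly `m` parity blocks with the last block positive. -/
theorem stmt_14 (d m n : ℕ) (hm : 1 ≤ m) (hmd : m ≤ d) :
    Nat.card {p : (Fin d → ℕ) × (Fin d → ℕ) //
        IsFrob d n p ∧ numChanges d p + 1 = m ∧ LastNeg d p}
      = Nat.card {p : (Fin d → ℕ) × (Fin d → ℕ) //
        IsFrob d (n + d) p ∧ numChanges d p + 1 = m ∧ LastPos d p} :=
  stmt_14_general d m n
end
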